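/- The left coset space P/F, where P is the subgroup of U(2) consisting of all matrices diag(a,b) and [[0,a],[b,0]] with |a| = |b| = 1, and F ≤ P is the subgroup of all matrices diag(a,a) and [[0,a],[a,0]] with |a| = 1, equipped with the quotient topology, is homeomorphic to the circle S¹. -/

import Mathlib

open Matrix

/-- The subgroup `P ≤ U(2)` of all matrices `diag(a,b)` and `[[0,a],[b,0]]` with
`|a| = |b| = 1`; it is the wreath product `S¹ ≀ C₂`. -/
def wreathP : Subgroup (Matrix.unitaryGroup (Fin 2) ℂ) where
  carrier := {Q | (∃ a b : ℂ, ‖a‖ = 1 ∧ ‖b‖ = 1 ∧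
      (Q : Matrix (Fin 2) (Fin 2) ℂ) = !![a, 0; 0, b]) ∨
    (∃ a b : ℂ, ‖a‖ = 1 ∧ ‖b‖ = 1 ∧
      (Q : Matrix (Fin 2) (Fin 2) ℂ) = !![0, a; b, 0])}
  one_mem' := Or.inl ⟨1, 1, by simp, by simp, by simp [Matrix.one_fin_two]⟩
  mul_mem' := by
    rintro P Q (⟨a, b, ha, hb, hP⟩ | ⟨a, b, ha, hb, hP⟩)
      (⟨a', b', ha', hb', hQ⟩ | ⟨a', b', ha', hb', hQ⟩)
    · refine Or.inl ⟨a * a', b * b', by simp [ha, ha'], by simp [hb, hb'], ?_⟩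
      show (P : Matrix (Fin 2) (Fin 2) ℂ) * (Q : Matrix (Fin 2) (Fin 2) ℂ) = _
      rw [hP, hQ]; simp [Matrix.mul_fin_two]
    · refine Or.inr ⟨a * a', b * b', by simp [ha, ha'], by simp [hb, hb'], ?_⟩
      show (P : Matrix (Fin 2) (Fin 2) ℂ) * (Q : Matrix (Fin 2) (Fin 2) ℂ) = _
      rw [hP, hQ]; simp [Matrix.mul_fin_two]
    · refine Or.inr ⟨a * b', b * a', by simp [ha, hb'], by simp [hb, ha'], ?_⟩
      show (P : Matrix (Fin 2) (Fin 2) ℂ) * (Q : Matrix (Fin 2) (Fin 2) ℂ) = _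
      rw [hP, hQ]; simp [Matrix.mul_fin_two]
    · refine Or.inl ⟨a * b', b * a', by simp [ha, hb'], by simp [hb, ha'], ?_⟩
      show (P : Matrix (Fin 2) (Fin 2) ℂ) * (Q : Matrix (Fin 2) (Fin 2) ℂ) = _
      rw [hP, hQ]; simp [Matrix.mul_fin_two]
  inv_mem' := by
    rintro Q (⟨a, b, ha, hb, hQ⟩ | ⟨a, b, ha, hb, hQ⟩)
    · refine Or.inl ⟨star a, star b, by simpa using ha, by simpa using hb, ?_⟩
      show star (Q : Matrix (Fin 2) (Fin 2) ℂ) = _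
      rw [hQ]; ext i j; fin_cases i <;> fin_cases j <;> simp [Matrix.star_apply]
    · refine Or.inr ⟨star b, star a, by simpa using hb, by simpa using ha, ?_⟩
      show star (Q : Matrix (Fin 2) (Fin 2) ℂ) = _
      rw [hQ]; ext i j; fin_cases i <;> fin_cases j <;> simp [Matrix.star_apply]

/-- The subgroup `F ≤ P` of all matrices `diag(a,a)` and `[[0,a],[a,0]]` with `|a| = 1`;
it is isomorphic to `C₂ × S¹`. -/
def diagoF : Subgroup wreathP where
  carrier := {Q | (∃ a : ℂ, ‖a‖ = 1 ∧
      ((Q : Matrix.unitaryGroup (Fin 2) ℂ) : Matrix (Fin 2) (Fin 2) ℂ) = !![a, 0; 0, a]) ∨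
    (∃ a : ℂ, ‖a‖ = 1 ∧
      ((Q : Matrix.unitaryGroup (Fin 2) ℂ) : Matrix (Fin 2) (Fin 2) ℂ) = !![0, a; a, 0])}
  one_mem' := Or.inl ⟨1, by simp, by simp [Matrix.one_fin_two]⟩
  mul_mem' := by
    rintro P Q (⟨a, ha, hP⟩ | ⟨a, ha, hP⟩) (⟨a', ha', hQ⟩ | ⟨a', ha', hQ⟩)
    · refine Or.inl ⟨a * a', by simp [ha, ha'], ?_⟩
      show ((P : Matrix.unitaryGroup (Fin 2) ℂ) : Matrix (Fin 2) (Fin 2) ℂ) *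
        ((Q : Matrix.unitaryGroup (Fin 2) ℂ) : Matrix (Fin 2) (Fin 2) ℂ) = _
      rw [hP, hQ]; simp [Matrix.mul_fin_two]
    · refine Or.inr ⟨a * a', by simp [ha, ha'], ?_⟩
      show ((P : Matrix.unitaryGroup (Fin 2) ℂ) : Matrix (Fin 2) (Fin 2) ℂ) *
        ((Q : Matrix.unitaryGroup (Fin 2) ℂ) : Matrix (Fin 2) (Fin 2) ℂ) = _
      rw [hP, hQ]; simp [Matrix.mul_fin_two]
    · refine Or.inr ⟨a * a', by simp [ha, ha'], ?_⟩
      show ((P : Matrix.unitaryGroup (Fin 2) ℂ) : Matrix (Fin 2) (Fin 2) ℂ) *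
        ((Q : Matrix.unitaryGroup (Fin 2) ℂ) : Matrix (Fin 2) (Fin 2) ℂ) = _
      rw [hP, hQ]; simp [Matrix.mul_fin_two]
    · refine Or.inl ⟨a * a', by simp [ha, ha'], ?_⟩
      show ((P : Matrix.unitaryGroup (Fin 2) ℂ) : Matrix (Fin 2) (Fin 2) ℂ) *
        ((Q : Matrix.unitaryGroup (Fin 2) ℂ) : Matrix (Fin 2) (Fin 2) ℂ) = _
      rw [hP, hQ]; simp [Matrix.mul_fin_two, mul_comm]
  inv_mem' := by
    rintro Q (⟨a, ha, hQ⟩ | ⟨a, ha, hQ⟩)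
    · refine Or.inl ⟨star a, by simpa using ha, ?_⟩
      show star ((Q : Matrix.unitaryGroup (Fin 2) ℂ) : Matrix (Fin 2) (Fin 2) ℂ) = _
      rw [hQ]; ext i j; fin_cases i <;> fin_cases j <;> simp [Matrix.star_apply]
    · refine Or.inr ⟨star a, by simpa using ha, ?_⟩
      show star ((Q : Matrix.unitaryGroup (Fin 2) ℂ) : Matrix (Fin 2) (Fin 2) ℂ) = _
      rw [hQ]; ext i j; fin_cases i <;> fin_cases j <;> simp [Matrix.star_apply]

namespace WreathAux

private lemma uabs {c : ℂ} (h : ‖c‖ = 1) : c * star c = 1 := by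
  rw [show (star c) = (starRingEnd ℂ) c from rfl, Complex.mul_conj]
  norm_cast
  rw [Complex.normSq_eq_norm_sq, h]; norm_num

private lemma d_mem {a b : ℂ} (ha : ‖a‖ = 1) (hb : ‖b‖ = 1) :
    !![a,0;0,b] ∈ Matrix.unitaryGroup (Fin 2) ℂ := by
  have hs : star !![a,0;0,b] = !![star a,0;0,star b] := by
    ext i j; fin_cases i <;> fin_cases j <;> simp [Matrix.star_apply]
  constructor <;>
    simp [hs, Matrix.mul_fin_two, Matrix.one_fin_two, Complex.star_def,
      ← Complex.normSq_eq_conj_mul_self, Complex.mul_conj, Complex.normSq_eq_norm_sq, ha, hb]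

private lemma a_mem {a b : ℂ} (ha : ‖a‖ = 1) (hb : ‖b‖ = 1) :
    !![0,a;b,0] ∈ Matrix.unitaryGroup (Fin 2) ℂ := by
  have hs : star !![0,a;b,0] = !![0,star b;star a,0] := by
    ext i j; fin_cases i <;> fin_cases j <;> simp [Matrix.star_apply]
  constructor <;>
    simp [hs, Matrix.mul_fin_two, Matrix.one_fin_two, Complex.star_def,
      ← Complex.normSq_eq_conj_mul_self, Complex.mul_conj, Complex.normSq_eq_norm_sq, ha, hb]

/-- The element `diag(a,b)` of `P`. -/
def dEl (a b : ℂ) (ha : ‖a‖ = 1) (hb : ‖b‖ = 1) : wreathP :=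
  ⟨⟨!![a,0;0,b], d_mem ha hb⟩, Or.inl ⟨a, b, ha, hb, rfl⟩⟩

/-- The element `[[0,a],[b,0]]` of `P`. -/
def aEl (a b : ℂ) (ha : ‖a‖ = 1) (hb : ‖b‖ = 1) : wreathP :=
  ⟨⟨!![0,a;b,0], a_mem ha hb⟩, Or.inr ⟨a, b, ha, hb, rfl⟩⟩

/-- The matrix underlying an element of `P`. -/
def m (Q : wreathP) : Matrix (Fin 2) (Fin 2) ℂ := ((Q : Matrix.unitaryGroup (Fin 2) ℂ) : Matrix (Fin 2) (Fin 2) ℂ)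

/-- The invariant `(Q₀₀+Q₀₁)·star(Q₁₀+Q₁₁)`. -/
def fC (Q : wreathP) : ℂ := (m Q 0 0 + m Q 0 1) * star (m Q 1 0 + m Q 1 1)

lemma m_mul (Q R : wreathP) : m (Q * R) = m Q * m R := rfl

lemma fC_of_diag {Q : wreathP} {a b : ℂ} (h : m Q = !![a,0;0,b]) : fC Q = a * star b := by
  simp [fC, h]

lemma fC_of_anti {Q : wreathP} {a b : ℂ} (h : m Q = !![0,a;b,0]) : fC Q = a * star b := by
  simp [fC, h]

lemma abs_fC (Q : wreathP) : ‖fC Q‖ = 1 := by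
  rcases Q.2 with ⟨a, b, ha, hb, h⟩ | ⟨a, b, ha, hb, h⟩
  · rw [fC_of_diag h, norm_mul, ha, show ‖star b‖ = 1 by simpa using hb,
      mul_one]
  · rw [fC_of_anti h, norm_mul, ha, show ‖star b‖ = 1 by simpa using hb,
      mul_one]

private lemma key {a b c : ℂ} (hc : ‖c‖ = 1) :
    (a * c) * star (b * c) = a * star b := by
  rw [star_mul']
  linear_combination a * star b * uabs hc

lemma fC_mul (Q g : wreathP) (hg : g ∈ diagoF) : fC (Q * g) = fC Q := by
  rcases Q.2 with ⟨a, b, ha, hb, hQ⟩ | ⟨a, b, ha, hb, hQ⟩ <;>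
    rcases hg with ⟨c, hc, hgm⟩ | ⟨c, hc, hgm⟩
  · have h2 : m (Q * g) = !![a*c,0;0,b*c] := by
      rw [m_mul, show m Q = _ from hQ, show m g = _ from hgm]; simp [Matrix.mul_fin_two]
    rw [fC_of_diag h2, fC_of_diag hQ, key hc]
  · have h2 : m (Q * g) = !![0,a*c;b*c,0] := by
      rw [m_mul, show m Q = _ from hQ, show m g = _ from hgm]; simp [Matrix.mul_fin_two]
    rw [fC_of_anti h2, fC_of_diag hQ, key hc]
  · have h2 : m (Q * g) = !![0,a*c;b*c,0] := by
      rw [m_mul, show m Q = _ from hQ, show m g = _ from hgm]; simp [Matrix.mul_fin_two]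
    rw [fC_of_anti h2, fC_of_anti hQ, key hc]
  · have h2 : m (Q * g) = !![a*c,0;0,b*c] := by
      rw [m_mul, show m Q = _ from hQ, show m g = _ from hgm]; simp [Matrix.mul_fin_two]
    rw [fC_of_diag h2, fC_of_anti hQ, key hc]

/-- Every coset contains `diag(fC Q, 1)`. -/
lemma mk_eq (Q : wreathP) :
    (QuotientGroup.mk Q : wreathP ⧸ diagoF) =
      QuotientGroup.mk (dEl (fC Q) 1 (abs_fC Q) (by simp)) := by
  rw [QuotientGroup.eq]
  rcases Q.2 with ⟨a, b, ha, hb, hQ⟩ | ⟨a, b, ha, hb, hQ⟩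
  · have hb' : ‖star b‖ = 1 := by simpa using hb
    have hg : dEl (star b) (star b) hb' hb' ∈ diagoF := Or.inl ⟨star b, hb', rfl⟩
    have hmul : Q * dEl (star b) (star b) hb' hb' = dEl (fC Q) 1 (abs_fC Q) (by simp) := by
      apply Subtype.ext; apply Subtype.ext
      show m Q * m (dEl (star b) (star b) hb' hb') = !![fC Q, 0; 0, (1:ℂ)]
      rw [fC_of_diag hQ, show m Q = _ from hQ,
        show m (dEl (star b) (star b) hb' hb') = !![star b,0;0,star b] from rfl]
      simp [Matrix.mul_fin_two, Complex.mul_conj, Complex.normSq_eq_norm_sq, hb]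
    rw [← hmul, ← mul_assoc, inv_mul_cancel, one_mul]; exact hg
  · have hb' : ‖star b‖ = 1 := by simpa using hb
    have hg : aEl (star b) (star b) hb' hb' ∈ diagoF := Or.inr ⟨star b, hb', rfl⟩
    have hmul : Q * aEl (star b) (star b) hb' hb' = dEl (fC Q) 1 (abs_fC Q) (by simp) := by
      apply Subtype.ext; apply Subtype.ext
      show m Q * m (aEl (star b) (star b) hb' hb') = !![fC Q, 0; 0, (1:ℂ)]
      rw [fC_of_anti hQ, show m Q = _ from hQ,
        show m (aEl (star b) (star b) hb' hb') = !![0,star b;star b,0] from rfl]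
      simp [Matrix.mul_fin_two, Complex.mul_conj, Complex.normSq_eq_norm_sq, hb]
    rw [← hmul, ← mul_assoc, inv_mul_cancel, one_mul]; exact hg

/-- `fC`, landing in the complex unit sphere. -/
def fS (Q : wreathP) : Metric.sphere (0:ℂ) 1 :=
  ⟨fC Q, by simp [mem_sphere_zero_iff_norm, abs_fC Q]⟩

lemma abs_of_sphere (z : Metric.sphere (0:ℂ) 1) : ‖(z : ℂ)‖ = 1 := by
  have := z.2; rwa [mem_sphere_zero_iff_norm] at this

/-- The section `z ↦ diag(z,1)`. -/
def sEl (z : Metric.sphere (0:ℂ) 1) : wreathP :=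
  dEl z 1 (abs_of_sphere z) (by simp)

lemma fS_invariant : ∀ (a b : wreathP),
    (QuotientGroup.leftRel diagoF).r a b → fS a = fS b := by
  intro a b h
  rw [QuotientGroup.leftRel_apply] at h
  apply Subtype.ext
  show fC a = fC b
  have hb : b = a * (a⁻¹ * b) := by group
  conv_rhs => rw [hb]
  rw [fC_mul a _ h]

end WreathAux

namespace WreathAux

lemma continuous_fS : Continuous fS := by
  have hent : ∀ i j : Fin 2, Continuous fun Q : wreathP => m Q i j := fun i j =>
    (continuous_subtype_val.comp continuous_subtype_val).matrix_elem i j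
  exact Continuous.subtype_mk
    ((((hent 0 0).add (hent 0 1)).mul (((hent 1 0).add (hent 1 1)).star))) _

lemma continuous_sEl : Continuous sEl := by
  apply Continuous.subtype_mk
  apply Continuous.subtype_mk
  apply continuous_matrix
  intro i j
  fin_cases i <;> fin_cases j <;>
    simp [sEl, dEl] <;>
    first
      | exact continuous_subtype_val
      | exact continuous_const

/-- The homeomorphism `P/F ≃ₜ S¹ ⊂ ℂ`. -/
noncomputable def quotHomeo : (wreathP ⧸ diagoF) ≃ₜ Metric.sphere (0:ℂ) 1 where
  toFun := Quotient.lift fS fS_invariant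
  invFun z := QuotientGroup.mk (sEl z)
  left_inv := by
    intro x
    induction x using QuotientGroup.induction_on with
    | H Q =>
      show QuotientGroup.mk (sEl (fS Q)) = QuotientGroup.mk Q
      rw [mk_eq Q]
      congr 1
  right_inv := by
    intro z
    apply Subtype.ext
    show fC (sEl z) = (z : ℂ)
    rw [fC_of_diag (show m (sEl z) = !![(z:ℂ),0;0,1] from rfl)]
    simp
  continuous_toFun := by
    apply Continuous.quotient_lift
    exact continuous_fS
  continuous_invFun := continuous_quotient_mk'.comp continuous_sEl

/-- `ℂ ≃ EuclideanSpace ℝ (Fin 2)` restricted to unit spheres. -/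
noncomputable def sphereHomeo :
    Metric.sphere (0:ℂ) 1 ≃ₜ Metric.sphere (0 : EuclideanSpace ℝ (Fin 2)) 1 where
  toFun z := ⟨Complex.orthonormalBasisOneI.repr z, by
    rw [mem_sphere_zero_iff_norm, LinearIsometryEquiv.norm_map]
    exact mem_sphere_zero_iff_norm.mp z.2⟩
  invFun x := ⟨Complex.orthonormalBasisOneI.repr.symm x, by
    rw [mem_sphere_zero_iff_norm, LinearIsometryEquiv.norm_map]
    exact mem_sphere_zero_iff_norm.mp x.2⟩
  left_inv z := by
    apply Subtype.ext
    exact Complex.orthonormalBasisOneI.repr.symm_apply_apply _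
  right_inv x := by
    apply Subtype.ext
    exact Complex.orthonormalBasisOneI.repr.apply_symm_apply _
  continuous_toFun := by
    apply Continuous.subtype_mk
    exact Complex.orthonormalBasisOneI.repr.continuous.comp continuous_subtype_val
  continuous_invFun := by
    apply Continuous.subtype_mk
    exact Complex.orthonormalBasisOneI.repr.symm.continuous.comp continuous_subtype_val

end WreathAux

/-- **The coset space `P/F` is homeomorphic to the circle `S¹`.** -/
theorem wreath_quotient_diago_homeo_circle :
    Nonempty ((wreathP ⧸ diagoF) ≃ₜ Metric.sphere (0 : EuclideanSpace ℝ (Fin 2)) 1) :=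
  ⟨WreathAux.quotHomeo.trans WreathAux.sphereHomeo⟩
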